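/- Let 𝒦² denote the space of all nonempty compact convex subsets of ℝ², equipped with the Hausdorff metric and the natural action of the group Aff(2) of invertible affine transformations of ℝ² given by (g,K) ↦ gK. Let T ⊆ ℝ² be the triangle with vertices (0,0), (1,0) and (0,1), and let b = (1/3, 1/3) be its centroid. Then there is no continuous Aff(2)-equivariant map ψ : 𝒦² → ℝ² with ψ(T) = b. -/

import Mathlib

/-! Write `Δ(c) = conv {0, e₁, c}`. When `c₂ ≠ 0`, the linear map `e₁ ↦ e₁, e₂ ↦ c` carries `T` to
`Δ(c)`, so equivariance forces `ψ(Δ(c)) = (e₁ + c) / 3`. Since `c ↦ Δ(c)` is 1-Lipschitz for the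
Hausdorff metric and `{c₂ ≠ 0}` is dense, continuity extends this formula to every `c`. But
`Δ(0) = Δ(e₁)` is the segment `[0, e₁]`, while the formula gives the two points `e₁ / 3 ≠ 2 e₁ / 3`. -/

/-- The point of `ℝ²` (as a Euclidean space) with the given coordinates. -/
noncomputable def pt2 (x y : ℝ) : EuclideanSpace ℝ (Fin 2) := (WithLp.equiv 2 (Fin 2 → ℝ)).symm ![x, y]

open Metric

section Triangle

variable {E : Type*} [SeminormedAddCommGroup E] [NormedSpace ℝ E]

lemma exists_mem_convexHull_insert_dist_le (x y : E) (s : Set E) :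
    ∀ p ∈ convexHull ℝ (insert x s), ∃ q ∈ convexHull ℝ (insert y s), dist p q ≤ dist x y := by
  rcases s.eq_empty_or_nonempty with rfl | hs
  · simp
  intro p hp
  rw [convexHull_insert hs, convexJoin_singleton_left, Set.mem_iUnion₂] at hp
  obtain ⟨z, hz, a, b, ha, hb, hab, rfl⟩ := hp
  refine ⟨a • y + b • z, ?_, ?_⟩
  · exact (convex_convexHull ℝ _) (subset_convexHull ℝ _ (Set.mem_insert y s))
      (convexHull_mono (Set.subset_insert y s) hz) ha hb hab
  · calc dist (a • x + b • z) (a • y + b • z) = a * dist x y := by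
          rw [dist_add_right, dist_smul₀, Real.norm_of_nonneg ha]
      _ ≤ dist x y := mul_le_of_le_one_left dist_nonneg (by linarith)

lemma hausdorffDist_convexHull_insert_le (x y : E) (s : Set E) :
    hausdorffDist (convexHull ℝ (insert x s)) (convexHull ℝ (insert y s)) ≤ dist x y :=
  hausdorffDist_le_of_mem_dist dist_nonneg (exists_mem_convexHull_insert_dist_le x y s)
    fun q hq ↦ by simpa only [dist_comm] using exists_mem_convexHull_insert_dist_le y x s q hq

noncomputable def ConvexBody.triangle (a b c : E) : ConvexBody E where
  carrier := convexHull ℝ {a, b, c}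
  convex' := convex_convexHull ℝ _
  isCompact' := (Set.toFinite _).isCompact_convexHull (𝕜 := ℝ)
  nonempty' := (Set.insert_nonempty _ _).convexHull

namespace ConvexBody

@[simp] lemma coe_triangle (a b c : E) : (triangle a b c : Set E) = convexHull ℝ {a, b, c} := rfl

lemma dist_triangle_triangle_le (a b c c' : E) :
    dist (triangle a b c) (triangle a b c') ≤ dist c c' := by
  have hperm : ∀ x : E, ({a, b, x} : Set E) = insert x {a, b} := fun x ↦ by
    rw [Set.pair_comm, Set.insert_comm]
  rw [← hausdorffDist_coe, coe_triangle, coe_triangle, hperm, hperm]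
  exact hausdorffDist_convexHull_insert_le c c' _

lemma continuous_triangle (a b : E) : Continuous (triangle a b) :=
  (LipschitzWith.of_dist_le_mul (K := 1) fun c c' ↦ by
    simpa using dist_triangle_triangle_le a b c c').continuous

lemma triangle_left_eq_triangle_right (a b : E) : triangle a b a = triangle a b b :=
  ConvexBody.ext <| by simp [Set.pair_comm]

end ConvexBody

end Triangle

local notation "ℝ²" => EuclideanSpace ℝ (Fin 2)

@[simp] lemma pt2_apply_zero (x y : ℝ) : pt2 x y 0 = x := rfl
@[simp] lemma pt2_apply_one (x y : ℝ) : pt2 x y 1 = y := rfl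

@[simp] lemma pt2_eta (v : ℝ²) : pt2 (v 0) (v 1) = v := by
  ext i; fin_cases i <;> rfl

lemma dense_setOf_apply_one_ne_zero : Dense {c : ℝ² | c 1 ≠ 0} :=
  (dense_compl_singleton 0).preimage <|
    (EuclideanSpace.proj (𝕜 := ℝ) (1 : Fin 2)).isOpenMap fun r ↦ ⟨pt2 0 r, rfl⟩

/-- The linear map with matrix columns `(1, 0)` and `c`. -/
noncomputable def columnMap (c : ℝ²) : ℝ² →ₗ[ℝ] ℝ² where
  toFun x := pt2 (x 0 + c 0 * x 1) (c 1 * x 1)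
  map_add' x y := by ext i; fin_cases i <;> simp [pt2] <;> ring
  map_smul' r x := by ext i; fin_cases i <;> simp [pt2] <;> ring

@[simp] lemma columnMap_apply (c x : ℝ²) : columnMap c x = pt2 (x 0 + c 0 * x 1) (c 1 * x 1) := rfl

noncomputable def columnEquiv (c : ℝ²) (hc : c 1 ≠ 0) : ℝ² ≃ₗ[ℝ] ℝ² :=
  .ofLinearMap (columnMap c) (columnMap (pt2 (-c 0 / c 1) (1 / c 1)))
    (by ext x i; fin_cases i <;> simp [pt2] <;> field_simp; ring)
    (by ext x i; fin_cases i <;> simp [pt2] <;> field_simp; ring)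

lemma columnMap_image_triangle (c : ℝ²) :
    columnMap c '' convexHull ℝ {pt2 0 0, pt2 1 0, pt2 0 1} = convexHull ℝ {pt2 0 0, pt2 1 0, c} := by
  rw [LinearMap.image_convexHull, Set.image_insert_eq, Set.image_insert_eq, Set.image_singleton]
  simp

lemma columnMap_centroid (c : ℝ²) :
    columnMap c (pt2 (1/3) (1/3)) = (1/3 : ℝ) • (pt2 1 0 + c) := by
  ext i; fin_cases i <;> simp [pt2] <;> ring

/-- Let `T ⊆ ℝ²` be the triangle with vertices `(0,0)`, `(1,0)`, `(0,1)`,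
regarded as an element of the space `𝒦²` of nonempty compact convex subsets of `ℝ²` with the
Hausdorff metric, and let `b = (1/3, 1/3)` be its centroid. Then there is no continuous
`Aff(2)`-equivariant map `ψ : 𝒦² → ℝ²` with `ψ T = b`. -/
theorem statement12 (T : ConvexBody (EuclideanSpace ℝ (Fin 2)))
    (hT : (T : Set (EuclideanSpace ℝ (Fin 2))) =
      convexHull ℝ {pt2 0 0, pt2 1 0, pt2 0 1}) :
    ¬ ∃ ψ : ConvexBody (EuclideanSpace ℝ (Fin 2)) → EuclideanSpace ℝ (Fin 2),
      Continuous ψ ∧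
      (∀ (g : EuclideanSpace ℝ (Fin 2) ≃ᵃ[ℝ] EuclideanSpace ℝ (Fin 2))
        (A B : ConvexBody (EuclideanSpace ℝ (Fin 2))),
        (B : Set (EuclideanSpace ℝ (Fin 2))) = g '' (A : Set (EuclideanSpace ℝ (Fin 2))) →
        ψ B = g (ψ A)) ∧
      ψ T = pt2 (1/3) (1/3) := by
  rintro ⟨ψ, hψ, hequiv, hψT⟩
  let f (c : ℝ²) : ℝ² := ψ (ConvexBody.triangle (pt2 0 0) (pt2 1 0) c)
  have hf_centroid : ∀ c ∈ {c : ℝ² | c 1 ≠ 0}, f c = (1/3 : ℝ) • (pt2 1 0 + c) := by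
    intro c hc
    rw [← columnMap_centroid, ← hψT]
    exact hequiv (columnEquiv c hc).toAffineEquiv T _ <| by
      rw [hT]; exact (columnMap_image_triangle c).symm
  have hf : ∀ c, f c = (1/3 : ℝ) • (pt2 1 0 + c) := congrFun <|
    (hψ.comp (ConvexBody.continuous_triangle _ _)).ext_on dense_setOf_apply_one_ne_zero
      (by fun_prop) hf_centroid
  have hdegenerate : f (pt2 0 0) = f (pt2 1 0) :=
    congrArg ψ (ConvexBody.triangle_left_eq_triangle_right _ _)
  rw [hf, hf] at hdegenerate
  have hfirst := congrArg (· 0) hdegenerate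
  norm_num [pt2] at hfirst
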